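/- The subgroup of GL(3,ℂ) generated by the three matrices σ₁ = diag(−1, 1, −1), σ₂ = −(1/2)·[[0, √2, −√2],[√2, 1, 1],[−√2, 1, 1]], and σ₃ = diag(−1, −1, 1) is isomorphic to the symmetric group S₄ on 4 letters. -/

import Mathlib

open Matrix Complex

noncomputable section

/-- σ₁ = diag(−1, 1, −1). -/
def m1 : Matrix (Fin 3) (Fin 3) ℂ := diagonal ![-1, 1, -1]

/-- σ₃ = diag(−1, −1, 1). -/
def m3 : Matrix (Fin 3) (Fin 3) ℂ := diagonal ![-1, -1, 1]

/-- σ₂ = −(1/2)·[[0, √2, −√2],[√2, 1, 1],[−√2, 1, 1]]. -/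
def m2 : Matrix (Fin 3) (Fin 3) ℂ :=
  -(1 / 2 : ℂ) •
    !![0, (Real.sqrt 2 : ℂ), -(Real.sqrt 2 : ℂ);
       (Real.sqrt 2 : ℂ), 1, 1;
       -(Real.sqrt 2 : ℂ), 1, 1]

/-!
Permutation matrices give S₄ a representation on ℂ⁴ that preserves the sum-zero hyperplane;
restricted to that hyperplane and twisted by the sign character it is a faithful
3-dimensional representation. In a suitable orthonormal basis of the hyperplane the adjacent
transpositions (0 1), (1 2), (2 3) act by σ₁, σ₂, σ₃, so the group they generate is the image of
S₄ under a faithful representation. Faithfulness: if σ acts trivially, then transporting back to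
ℂ⁴ gives `sign σ • (P_σ - J/4) = 1 - J/4` with `J` the all-ones matrix, and the diagonal entries
force `σ = 1`.
-/

namespace Matrix

variable {G R m n : Type*} [Monoid G] [Fintype m] [Fintype n] [DecidableEq m] [DecidableEq n]

section Compression

variable [Semiring R] (ρ : G →* Matrix n n R) {A : Matrix m n R} {B : Matrix n m R}

@[simps]
def compressionHom (hAB : A * B = 1) (hcomm : ∀ g, Commute (ρ g) (B * A)) :
    G →* Matrix m m R where
  toFun g := A * ρ g * B
  map_one' := by rw [map_one, Matrix.mul_one, hAB]
  map_mul' g h := by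
    calc A * ρ (g * h) * B = (A * B) * A * (ρ g * ρ h) * B := by
          rw [map_mul, hAB, Matrix.one_mul]
      _ = A * (B * A * ρ g) * ρ h * B := by simp only [Matrix.mul_assoc]
      _ = A * ρ g * B * (A * ρ h * B) := by
          rw [← (hcomm g).eq]; simp only [Matrix.mul_assoc]

theorem mul_compressionHom_mul (hAB : A * B = 1) (hcomm : ∀ g, Commute (ρ g) (B * A)) (g : G) :
    B * compressionHom ρ hAB hcomm g * A = ρ g * (B * A) := by
  calc B * (A * ρ g * B) * A = B * A * ρ g * (B * A) := by simp only [Matrix.mul_assoc]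
    _ = ρ g * (B * A) * (B * A) := by rw [(hcomm g).eq]
    _ = ρ g * (B * A) := by
      rw [Matrix.mul_assoc, Matrix.mul_assoc B, ← Matrix.mul_assoc A, hAB, Matrix.one_mul]

end Compression

@[simps]
def twistHom [Ring R] (χ : G →* ℤˣ) (ρ : G →* Matrix m m R) : G →* Matrix m m R where
  toFun g := (χ g : ℤ) • ρ g
  map_one' := by simp
  map_mul' g h := by simp only [map_mul, Units.val_mul, smul_mul_smul_comm, mul_smul]

section AllOnes

variable (R n) in
def allOnes [One R] : Matrix n n R := of fun _ _ => 1

variable [NonAssocSemiring R] (σ : Equiv.Perm n)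

theorem permMatrix_mul_allOnes : σ.permMatrix R * allOnes R n = allOnes R n := by
  ext i j
  simp [allOnes, mul_apply, PEquiv.toMatrix_apply]

theorem allOnes_mul_permMatrix : allOnes R n * σ.permMatrix R = allOnes R n := by
  ext i j
  simp [allOnes, mul_apply, PEquiv.toMatrix_apply, ← Equiv.eq_symm_apply]

theorem commute_permMatrix_allOnes : Commute (σ.permMatrix R) (allOnes R n) :=
  (permMatrix_mul_allOnes σ).trans (allOnes_mul_permMatrix σ).symm

end AllOnes

end Matrix

def MonoidHom.closureImageMulEquiv {G H : Type*} [Group G] [Group H] {φ : G →* H}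
    (hφ : Function.Injective φ) {S : Set G} (hS : Subgroup.closure S = ⊤) :
    Subgroup.closure (φ '' S) ≃* G :=
  (MulEquiv.subgroupCongr (by rw [← MonoidHom.map_closure, hS, ← MonoidHom.range_eq_map])).trans
    (MonoidHom.ofInjective hφ).symm

open Equiv

theorem Equiv.Perm.closure_adjacent_swaps_fin_four :
    Subgroup.closure {swap (0 : Fin 4) 1, swap 1 2, swap 2 3} = ⊤ := by
  convert Subgroup.closure_eq_top_of_mclosure_eq_top (Perm.mclosure_swap_castSucc_succ 3) using 2
  ext τ
  simp [Fin.exists_fin_succ, eq_comm]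

theorem Complex.ofReal_sqrt_two_sq : (Real.sqrt 2 : ℂ) ^ 2 = 2 := by
  rw [← ofReal_pow, Real.sq_sqrt zero_le_two]; norm_num

def sumZeroBasis : Matrix (Fin 3) (Fin 4) ℂ :=
  !![1 / 2, 1 / 2, -(1 / 2), -(1 / 2);
     Real.sqrt 2 / 2, -(Real.sqrt 2 / 2), 0, 0;
     0, 0, -(Real.sqrt 2 / 2), Real.sqrt 2 / 2]

theorem sumZeroBasis_mul_transpose : sumZeroBasis * sumZeroBasisᵀ = 1 := by
  ext i j
  fin_cases i <;> fin_cases j <;> simp [sumZeroBasis, mul_apply, Fin.sum_univ_four, one_apply] <;>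
    ring_nf <;> norm_num [ofReal_sqrt_two_sq]

theorem transpose_mul_sumZeroBasis :
    sumZeroBasisᵀ * sumZeroBasis = 1 - (4 : ℂ)⁻¹ • allOnes ℂ (Fin 4) := by
  ext i j
  fin_cases i <;> fin_cases j <;>
    simp [sumZeroBasis, allOnes, mul_apply, Fin.sum_univ_three, one_apply] <;>
    ring_nf <;> norm_num [ofReal_sqrt_two_sq]

theorem commute_permMatrixHom_transpose_mul_sumZeroBasis (σ : Perm (Fin 4)) :
    Commute (permMatrixHom σ : Matrix (Fin 4) (Fin 4) ℂ) (sumZeroBasisᵀ * sumZeroBasis) := by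
  rw [transpose_mul_sumZeroBasis]
  exact (Commute.one_right _).sub_right ((commute_permMatrix_allOnes _).smul_right _)

def signedStandardRep : Perm (Fin 4) →* Matrix (Fin 3) (Fin 3) ℂ :=
  twistHom Perm.sign
    (compressionHom permMatrixHom sumZeroBasis_mul_transpose
      commute_permMatrixHom_transpose_mul_sumZeroBasis)

theorem signedStandardRep_swap {i j : Fin 4} (h : i ≠ j) :
    signedStandardRep (swap i j) = -(sumZeroBasis.submatrix id (swap i j) * sumZeroBasisᵀ) := by
  simp [signedStandardRep, Perm.sign_swap h, PEquiv.mul_toMatrix_toPEquiv]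

theorem signedStandardRep_swap_zero_one : signedStandardRep (swap 0 1) = m1 := by
  rw [signedStandardRep_swap (by decide)]
  ext i j
  fin_cases i <;> fin_cases j <;>
    simp [sumZeroBasis, m1, mul_apply, Fin.sum_univ_four, swap_apply_of_ne_of_ne] <;>
    ring_nf <;> norm_num [ofReal_sqrt_two_sq]

theorem signedStandardRep_swap_one_two : signedStandardRep (swap 1 2) = m2 := by
  rw [signedStandardRep_swap (by decide)]
  ext i j
  fin_cases i <;> fin_cases j <;>
    simp [sumZeroBasis, m2, mul_apply, Fin.sum_univ_four, swap_apply_of_ne_of_ne] <;>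
    ring_nf <;> norm_num [ofReal_sqrt_two_sq]

theorem signedStandardRep_swap_two_three : signedStandardRep (swap 2 3) = m3 := by
  rw [signedStandardRep_swap (by decide)]
  ext i j
  fin_cases i <;> fin_cases j <;>
    simp [sumZeroBasis, m3, mul_apply, Fin.sum_univ_four, swap_apply_of_ne_of_ne] <;>
    ring_nf <;> norm_num [ofReal_sqrt_two_sq]

theorem signedStandardRep_injective : Function.Injective signedStandardRep := by
  rw [injective_iff_map_eq_one]
  intro σ hσ
  have h : (Perm.sign σ : ℤ) • (permMatrixHom σ * (sumZeroBasisᵀ * sumZeroBasis)) =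
      sumZeroBasisᵀ * sumZeroBasis := by
    rw [← mul_compressionHom_mul _ sumZeroBasis_mul_transpose
        commute_permMatrixHom_transpose_mul_sumZeroBasis, ← Matrix.smul_mul, ← Matrix.mul_smul]
    change sumZeroBasisᵀ * signedStandardRep σ * sumZeroBasis = _
    rw [hσ, Matrix.mul_one]
  rw [transpose_mul_sumZeroBasis, Matrix.mul_sub, Matrix.mul_one, Matrix.mul_smul,
    permMatrixHom_apply, permMatrix_mul_allOnes] at h
  refine Equiv.ext fun j => ?_
  have hj := congrFun (congrFun h j) j
  simp only [Matrix.smul_apply, Matrix.sub_apply, one_apply_eq, allOnes, of_apply, smul_eq_mul,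
    mul_one, PEquiv.toMatrix_apply, toPEquiv_apply, Option.mem_some_iff, Perm.inv_def] at hj
  by_cases hfix : σ.symm j = j
  · exact (σ.symm_apply_eq.mp hfix).symm
  · rcases Int.units_eq_one_or (Perm.sign σ) with hs | hs <;> norm_num [hfix, hs] at hj

/-- The subgroup of GL(3,ℂ) generated by σ₁, σ₂, σ₃ is isomorphic to the
symmetric group S₄ on 4 letters. -/
theorem stmt10 (a b c : GL (Fin 3) ℂ)
    (ha : (a : Matrix (Fin 3) (Fin 3) ℂ) = m1)
    (hb : (b : Matrix (Fin 3) (Fin 3) ℂ) = m2)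
    (hc : (c : Matrix (Fin 3) (Fin 3) ℂ) = m3) :
    Nonempty ((Subgroup.closure ({a, b, c} : Set (GL (Fin 3) ℂ))) ≃* Equiv.Perm (Fin 4)) := by
  let φ : Perm (Fin 4) →* GL (Fin 3) ℂ := signedStandardRep.toHomUnits
  have hφ : Function.Injective φ := fun σ τ h =>
    signedStandardRep_injective (congrArg Units.val h)
  have hφa : φ (swap 0 1) = a :=
    Units.ext (by rw [MonoidHom.coe_toHomUnits, signedStandardRep_swap_zero_one, ha])
  have hφb : φ (swap 1 2) = b :=
    Units.ext (by rw [MonoidHom.coe_toHomUnits, signedStandardRep_swap_one_two, hb])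
  have hφc : φ (swap 2 3) = c :=
    Units.ext (by rw [MonoidHom.coe_toHomUnits, signedStandardRep_swap_two_three, hc])
  have himage : φ '' {swap 0 1, swap 1 2, swap 2 3} = {a, b, c} := by
    rw [Set.image_insert_eq, Set.image_insert_eq, Set.image_singleton, hφa, hφb, hφc]
  rw [← himage]
  exact ⟨MonoidHom.closureImageMulEquiv hφ Perm.closure_adjacent_swaps_fin_four⟩
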